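/- arXiv:1608.04673 — 6 statements merged into one kernel-verified Lean document; each statement's English description precedes it below -/
import Mathlib

section
/- Let Ω be a finite set with more than one element and let G be a solvable subgroup of the symmetric group on Ω that is primitive. Then any minimal normal subgroup N of G is an elementary abelian l-group for some prime l (i.e. N is a nontrivial finite abelian group in which every nonidentity element has order l), and N acts simply transitively on Ω; in particular the cardinality of Ω is l^n where l^n is the order of N. -/
/-!
The commutator subgroup `⁅N, N⁆` is again normalized by `G`, and it is a proper subgroup of the
nontrivial solvable group `N`; by minimality it is trivial, so `N` is abelian. For a prime `l`
dividing `|N|`, the elements of `N` killed by `l` then form a nontrivial subgroup normalized by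
`G`, hence all of `N`. The `N`-orbits form a partition of `Ω` permuted by `G`, so primitivity
forces a single orbit (singleton orbits would make `N` trivial). A transitive abelian permutation
group acts freely, hence regularly, so `|Ω| = |N|` is a power of `l`.
-/

/-- A subgroup `G` of the symmetric group on `Ω` is primitive if it is nontrivial and
there is no `G`-stable essential partition of `Ω` (a partition with more than one part,
all parts nonempty, some part with more than one element, whose parts are permuted
by every element of `G`). -/
def IsPrimitivePermGroup {Ω : Type*} (G : Subgroup (Equiv.Perm Ω)) : Prop :=
  G ≠ ⊥ ∧
    ¬∃ P : Set (Set Ω), Setoid.IsPartition P ∧ 1 < P.ncard ∧ (∃ B ∈ P, 1 < B.ncard) ∧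
      ∀ g ∈ G, ∀ B ∈ P, ⇑g '' B ∈ P

namespace Subgroup

variable {H : Type*} [Group H]

structure IsMinimalNormalIn (N G : Subgroup H) : Prop where
  le : N ≤ G
  conj_mem : ∀ g ∈ G, ∀ n ∈ N, g * n * g⁻¹ ∈ N
  ne_bot : N ≠ ⊥
  eq_of_le : ∀ N' : Subgroup H, N' ≤ G → (∀ g ∈ G, ∀ n ∈ N', g * n * g⁻¹ ∈ N') → N' ≠ ⊥ →
    N' ≤ N → N' = N

theorem conj_mem_commutator {G N : Subgroup H} (hN : ∀ g ∈ G, ∀ n ∈ N, g * n * g⁻¹ ∈ N)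
    {g : H} (hg : g ∈ G) {n : H} (hn : n ∈ ⁅N, N⁆) : g * n * g⁻¹ ∈ ⁅N, N⁆ := by
  have hmap : N.map (MulAut.conj g).toMonoidHom ≤ N := by
    rintro _ ⟨m, hm, rfl⟩
    exact hN g hg m hm
  have := mem_map_of_mem (MulAut.conj g).toMonoidHom hn
  rw [map_commutator] at this
  exact commutator_mono hmap hmap this

theorem commutator_lt_self {N : Subgroup H} [Group.IsSolvable N] (hN : N ≠ ⊥) : ⁅N, N⁆ < N := by
  rw [← nontrivial_iff_ne_bot] at hN
  rw [← N.range_subtype, MonoidHom.range_eq_map, ← map_commutator, map_subtype_lt_map_subtype]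
  exact Group.IsSolvable.commutator_lt_top_of_nontrivial N

def powEqOne (N : Subgroup H) (hcomm : ∀ a ∈ N, ∀ b ∈ N, a * b = b * a) (l : ℕ) :
    Subgroup H where
  carrier := {n | n ∈ N ∧ n ^ l = 1}
  one_mem' := ⟨N.one_mem, one_pow l⟩
  mul_mem' := fun {a b} ha hb => ⟨N.mul_mem ha.1 hb.1, by
    rw [(Commute.mul_pow (hcomm a ha.1 b hb.1)), ha.2, hb.2, one_mul]⟩
  inv_mem' := fun {a} ha => ⟨N.inv_mem ha.1, by rw [inv_pow, ha.2, inv_one]⟩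

theorem mem_powEqOne {N : Subgroup H} {hcomm : ∀ a ∈ N, ∀ b ∈ N, a * b = b * a} {l : ℕ}
    {n : H} : n ∈ N.powEqOne hcomm l ↔ n ∈ N ∧ n ^ l = 1 := Iff.rfl

theorem powEqOne_le (N : Subgroup H) (hcomm : ∀ a ∈ N, ∀ b ∈ N, a * b = b * a) (l : ℕ) :
    N.powEqOne hcomm l ≤ N := fun _ hn => hn.1

theorem conj_mem_powEqOne {G N : Subgroup H} (hN : ∀ g ∈ G, ∀ n ∈ N, g * n * g⁻¹ ∈ N)
    {hcomm : ∀ a ∈ N, ∀ b ∈ N, a * b = b * a} {l : ℕ} {g : H} (hg : g ∈ G) {n : H}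
    (hn : n ∈ N.powEqOne hcomm l) : g * n * g⁻¹ ∈ N.powEqOne hcomm l :=
  ⟨hN g hg n hn.1, by rw [conj_pow, hn.2, mul_one, mul_inv_cancel]⟩

theorem exists_card_eq_prime_pow {N : Subgroup H} [Finite N]
    (hbot : N ≠ ⊥) {l : ℕ} (hl : l.Prime) (hpow : ∀ n ∈ N, n ^ l = 1) :
    ∃ k, 0 < k ∧ Nat.card N = l ^ k := by
  have : Fact l.Prime := ⟨hl⟩
  have : Nontrivial N := (nontrivial_iff_ne_bot N).mpr hbot
  have hp : IsPGroup l N := isPGroup_iff_pow_pow_eq_one.mpr fun n =>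
    ⟨1, Subtype.ext (by simp [hpow n n.2])⟩
  obtain ⟨k, hk⟩ := IsPGroup.iff_card.mp hp
  refine ⟨k, Nat.pos_of_ne_zero fun hk0 => ?_, hk⟩
  have := Finite.one_lt_card (α := N)
  simp [hk, hk0] at this

namespace IsMinimalNormalIn

variable {N G : Subgroup H}

theorem mul_comm_of_isSolvable (hN : N.IsMinimalNormalIn G) (hG : Group.IsSolvable G) :
    ∀ a ∈ N, ∀ b ∈ N, a * b = b * a := by
  have : Group.IsSolvable N := Group.isSolvable_of_isSolvable_injective (inclusion_injective hN.le)
  have hcomm : ⁅N, N⁆ = ⊥ := by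
    by_contra hne
    have hlt := commutator_lt_self hN.ne_bot
    exact hlt.ne (hN.eq_of_le _ (hlt.le.trans hN.le)
      (fun g hg n hn => conj_mem_commutator hN.conj_mem hg hn) hne hlt.le)
  intro a ha b hb
  exact (mem_centralizer_iff.mp (commutator_eq_bot_iff_le_centralizer.mp hcomm ha) b hb).symm

theorem exists_prime_pow_eq_one [Finite N] (hN : N.IsMinimalNormalIn G)
    (hcomm : ∀ a ∈ N, ∀ b ∈ N, a * b = b * a) : ∃ l, l.Prime ∧ ∀ n ∈ N, n ^ l = 1 := by
  have : Nontrivial N := (nontrivial_iff_ne_bot N).mpr hN.ne_bot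
  obtain ⟨l, hl, hdvd⟩ := Nat.exists_prime_and_dvd (Finite.one_lt_card (α := N)).ne'
  have : Fact l.Prime := ⟨hl⟩
  obtain ⟨t, ht⟩ := exists_prime_orderOf_dvd_card' l hdvd
  have hbot : N.powEqOne hcomm l ≠ ⊥ := by
    have htl : (t : H) ^ l = 1 := by rw [← orderOf_dvd_iff_pow_eq_one, orderOf_submonoid, ht]
    have ht1 : (t : H) ≠ 1 := by
      rw [ne_eq, ← orderOf_eq_one_iff, orderOf_submonoid, ht]
      exact hl.ne_one
    exact (nontrivial_iff_ne_bot _).mp ((nontrivial_iff_exists_ne_one _).mpr ⟨t, ⟨t.2, htl⟩, ht1⟩)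
  have hle := N.powEqOne_le hcomm l
  have heq := hN.eq_of_le _ (hle.trans hN.le) (fun g hg n hn => conj_mem_powEqOne hN.conj_mem hg hn)
    hbot hle
  exact ⟨l, hl, fun n hn => (mem_powEqOne.mp (heq ▸ hn)).2⟩

end IsMinimalNormalIn

end Subgroup

open Equiv MulAction

section PermGroup

variable {Ω : Type*} {G N : Subgroup (Perm Ω)}

namespace Subgroup

theorem mem_orbit_iff_exists_apply_eq {x y : Ω} :
    y ∈ orbit N x ↔ ∃ n ∈ N, n x = y := by
  simp [mem_orbit_iff, smul_def, Perm.smul_def]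

theorem image_orbit_of_conj_mem (hN : ∀ g ∈ G, ∀ n ∈ N, g * n * g⁻¹ ∈ N) {g : Perm Ω}
    (hg : g ∈ G) (x : Ω) : ⇑g '' orbit N x = orbit N (g x) := by
  ext z
  simp only [Set.mem_image, mem_orbit_iff_exists_apply_eq]
  constructor
  · rintro ⟨_, ⟨n, hn, rfl⟩, rfl⟩
    exact ⟨g * n * g⁻¹, hN g hg n hn, by simp [Perm.mul_apply]⟩
  · rintro ⟨n, hn, rfl⟩
    have hconj : g⁻¹ * n * g⁻¹⁻¹ ∈ N := hN g⁻¹ (inv_mem hg) n hn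
    rw [inv_inv] at hconj
    exact ⟨(g⁻¹ * n * g) x, ⟨_, hconj, rfl⟩, by simp [Perm.mul_apply]⟩

theorem eq_one_of_apply_eq_self (hcomm : ∀ a ∈ N, ∀ b ∈ N, a * b = b * a)
    (htrans : ∀ x y : Ω, ∃ n ∈ N, n x = y) {n : Perm Ω} (hn : n ∈ N) {x : Ω} (hx : n x = x) :
    n = 1 := by
  ext z
  obtain ⟨p, hp, rfl⟩ := htrans x z
  simpa [Perm.mul_apply, hx] using congrArg (· x) (hcomm n hn p hp)

theorem existsUnique_apply_eq (hcomm : ∀ a ∈ N, ∀ b ∈ N, a * b = b * a)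
    (htrans : ∀ x y : Ω, ∃ n ∈ N, n x = y) (x y : Ω) : ∃! n : Perm Ω, n ∈ N ∧ n x = y := by
  obtain ⟨n, hn, rfl⟩ := htrans x y
  refine ⟨n, ⟨hn, rfl⟩, fun m ⟨hm, hmx⟩ => ?_⟩
  have h1 : n⁻¹ * m = 1 := eq_one_of_apply_eq_self hcomm htrans (mul_mem (inv_mem hn) hm)
    (x := x) (by simp [Perm.mul_apply, hmx])
  exact (inv_mul_eq_one.mp h1).symm

theorem card_eq_of_existsUnique_apply_eq
    (hreg : ∀ x y : Ω, ∃! n : Perm Ω, n ∈ N ∧ n x = y) (x : Ω) : Nat.card N = Nat.card Ω := by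
  refine Nat.card_eq_of_bijective (fun n : N => (n : Perm Ω) x) ⟨fun n m hnm => ?_, fun y => ?_⟩
  · exact Subtype.ext ((hreg x _).unique ⟨n.2, rfl⟩ ⟨m.2, hnm.symm⟩)
  · obtain ⟨n, ⟨hn, hnx⟩, -⟩ := hreg x y
    exact ⟨⟨n, hn⟩, hnx⟩

end Subgroup

namespace IsPrimitivePermGroup

theorem ncard_le_one_or (hG : IsPrimitivePermGroup G) {P : Set (Set Ω)}
    (hP : Setoid.IsPartition P) (hstab : ∀ g ∈ G, ∀ B ∈ P, ⇑g '' B ∈ P) :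
    P.ncard ≤ 1 ∨ ∀ B ∈ P, B.ncard ≤ 1 := by
  by_contra! h
  exact hG.2 ⟨P, hP, h.1, h.2, hstab⟩

theorem exists_apply_eq_of_conj_mem [Finite Ω] (hG : IsPrimitivePermGroup G)
    (hN : ∀ g ∈ G, ∀ n ∈ N, g * n * g⁻¹ ∈ N) (hbot : N ≠ ⊥) (x y : Ω) : ∃ n ∈ N, n x = y := by
  have hstab : ∀ g ∈ G, ∀ B ∈ Set.range (orbit N ·), ⇑g '' B ∈ Set.range (orbit N ·) := by
    rintro g hg _ ⟨a, rfl⟩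
    exact ⟨g a, (Subgroup.image_orbit_of_conj_mem hN hg a).symm⟩
  rcases hG.ncard_le_one_or IsPartition.of_orbits hstab with hP | hB
  · have horbit : orbit N x = orbit N y :=
      (Set.ncard_le_one (Set.toFinite _)).mp hP _ ⟨x, rfl⟩ _ ⟨y, rfl⟩
    rw [← Subgroup.mem_orbit_iff_exists_apply_eq, horbit]
    exact mem_orbit_self y
  · refine absurd ((Subgroup.eq_bot_iff_forall N).mpr fun n hn => ?_) hbot
    ext z
    simpa using (Set.ncard_le_one (Set.toFinite _)).mp (hB _ ⟨z, rfl⟩) _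
      (Subgroup.mem_orbit_iff_exists_apply_eq.mpr ⟨n, hn, rfl⟩) _ (mem_orbit_self z)

end IsPrimitivePermGroup

end PermGroup

theorem stmt0_general {Ω : Type*} [Finite Ω]
    (G : Subgroup (Equiv.Perm Ω)) (hsolv : IsSolvable G) (hprim : IsPrimitivePermGroup G)
    (N : Subgroup (Equiv.Perm Ω)) (hNG : N ≤ G)
    (hNnorm : ∀ g ∈ G, ∀ n ∈ N, g * n * g⁻¹ ∈ N) (hNbot : N ≠ ⊥)
    (hNmin : ∀ N' : Subgroup (Equiv.Perm Ω), N' ≤ G →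
      (∀ g ∈ G, ∀ n ∈ N', g * n * g⁻¹ ∈ N') → N' ≠ ⊥ → N' ≤ N → N' = N) :
    ∃ l : ℕ, l.Prime ∧
      (∀ n ∈ N, n ≠ 1 → orderOf n = l) ∧
      (∀ a ∈ N, ∀ b ∈ N, a * b = b * a) ∧
      (∀ x y : Ω, ∃! g : Equiv.Perm Ω, g ∈ N ∧ g x = y) ∧
      ∃ k : ℕ, 0 < k ∧ Nat.card N = l ^ k ∧ Nat.card Ω = l ^ k := by
  have hN : N.IsMinimalNormalIn G := ⟨hNG, hNnorm, hNbot, hNmin⟩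
  have hcomm := hN.mul_comm_of_isSolvable hsolv
  obtain ⟨l, hl, hpow⟩ := hN.exists_prime_pow_eq_one hcomm
  have : Fact l.Prime := ⟨hl⟩
  have hreg := N.existsUnique_apply_eq hcomm (hprim.exists_apply_eq_of_conj_mem hNnorm hNbot)
  obtain ⟨x⟩ : Nonempty Ω := not_isEmpty_iff.mp fun _ => hNbot (Subsingleton.elim _ _)
  obtain ⟨k, hk, hcard⟩ := N.exists_card_eq_prime_pow hNbot hl hpow
  exact ⟨l, hl, fun n hn hn1 => orderOf_eq_prime (hpow n hn) hn1, hcomm, hreg, k, hk, hcard,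
    N.card_eq_of_existsUnique_apply_eq hreg x ▸ hcard⟩

theorem stmt0 {Ω : Type*} [Finite Ω] (hΩ : 1 < Nat.card Ω)
    (G : Subgroup (Equiv.Perm Ω)) (hsolv : IsSolvable G) (hprim : IsPrimitivePermGroup G)
    (N : Subgroup (Equiv.Perm Ω)) (hNG : N ≤ G)
    (hNnorm : ∀ g ∈ G, ∀ n ∈ N, g * n * g⁻¹ ∈ N) (hNbot : N ≠ ⊥)
    (hNmin : ∀ N' : Subgroup (Equiv.Perm Ω), N' ≤ G →
      (∀ g ∈ G, ∀ n ∈ N', g * n * g⁻¹ ∈ N') → N' ≠ ⊥ → N' ≤ N → N' = N) :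
    ∃ l : ℕ, l.Prime ∧
      (∀ n ∈ N, n ≠ 1 → orderOf n = l) ∧
      (∀ a ∈ N, ∀ b ∈ N, a * b = b * a) ∧
      (∀ x y : Ω, ∃! g : Equiv.Perm Ω, g ∈ N ∧ g x = y) ∧
      ∃ k : ℕ, 0 < k ∧ Nat.card N = l ^ k ∧ Nat.card Ω = l ^ k :=
  stmt0_general G hsolv hprim N hNG hNnorm hNbot hNmin
end

section
/- Let F be a field and E a finite separable extension of F which is primitive (the only intermediate fields F ⊆ K ⊆ E are K = F and K = E, and [E:F] > 1) and solvable over F (the Galois group Gal(D|F) of the Galois closure D of E over F is a solvable group). Then [E:F] = l^n for some prime l and some integer n > 0. -/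
/-!
By the Galois correspondence, a primitive `E` corresponds to a maximal subgroup `H` of the
solvable group `G = Gal(D|F)`, and `[E:F] = [G:H]`. A nontrivial finite solvable group has a
normal subgroup `P` of prime-power order (a Sylow subgroup of its last nontrivial derived
subgroup). If `P ≤ H`, pass to `G ⧸ P` and induct on `|G|`; otherwise maximality forces
`H ⊔ P = G`, and then `[G:H] = [P : P ⊓ H]` divides `|P|`.
-/

namespace Subgroup

variable {G G' : Type*} [Group G] [Group G']

theorem index_eq_relIndex_of_sup_eq_top [Finite G] {H K : Subgroup G} [K.Normal]
    (h : H ⊔ K = ⊤) : H.index = H.relIndex K := by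
  have hK : K.index = K.relIndex H := by
    rw [← relIndex_top_right, ← h, relIndex_sup_right]
  have : K.IsFiniteRelIndex H := isFiniteRelIndex_of_finiteIndex
  refine mul_left_cancel₀ (relIndex_ne_zero (H := K) (K := H)) ?_
  calc K.relIndex H * H.index = (H ⊓ K).index := by
        rw [← inf_relIndex_left, relIndex_mul_index inf_le_left]
    _ = K.relIndex H * H.relIndex K := by
        rw [← relIndex_mul_index inf_le_right, inf_relIndex_right, hK, mul_comm]

theorem isCoatom_map_of_surjective {f : G →* G'} (hf : Function.Surjective f) {H : Subgroup G}
    (hH : IsCoatom H) (hker : f.ker ≤ H) : IsCoatom (H.map f) := by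
  have hcomap : (H.map f).comap f = H := comap_map_eq_self hker
  refine ⟨fun htop => hH.1 ?_, fun K hK => ?_⟩
  · rw [← hcomap, htop, comap_top]
  · have : H < K.comap f := hcomap ▸ (comap_lt_comap_of_surjective hf).mpr hK
    rw [← map_comap_eq_self_of_surjective hf K, hH.2 _ this, map_top_of_surjective f hf]

end Subgroup

namespace Group.IsSolvable

variable {G : Type*} [Group G]

theorem exists_normal_ne_bot_commutator_eq_bot [IsSolvable G] [Nontrivial G] :
    ∃ N : Subgroup G, N.Normal ∧ N ≠ ⊥ ∧ ⁅N, N⁆ = ⊥ := by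
  classical
  have hex : ∃ m, derivedSeries G (m + 1) = ⊥ := by
    obtain ⟨m, hm⟩ := IsSolvable.solvable (G := G)
    exact ⟨m, eq_bot_mono (derivedSeries_antitone G m.le_succ) hm⟩
  refine ⟨derivedSeries G (Nat.find hex), derivedSeries_normal G _, ?_, Nat.find_spec hex⟩
  cases h : Nat.find hex with
  | zero => simp
  | succ k => exact Nat.find_min hex (h ▸ k.lt_succ_self)

theorem exists_normal_isPrimePow_card [Finite G] [IsSolvable G] [Nontrivial G] :
    ∃ P : Subgroup G, P.Normal ∧ IsPrimePow (Nat.card P) := by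
  obtain ⟨N, hN, hNbot, hNN⟩ := exists_normal_ne_bot_commutator_eq_bot (G := G)
  have : Nontrivial N := (Subgroup.nontrivial_iff_ne_bot N).mpr hNbot
  have : IsMulCommutative N := Subgroup.commutator_self_eq_bot_iff.mp hNN
  obtain ⟨p, hp, hpN⟩ := Nat.exists_prime_and_dvd (Finite.one_lt_card (α := N)).ne'
  have : Fact p.Prime := ⟨hp⟩
  obtain ⟨Q⟩ : Nonempty (Sylow p N) := Sylow.nonempty
  -- a Sylow subgroup of the abelian normal subgroup `N` is characteristic in `N`, so normal in `G`
  have : (Q : Subgroup N).Characteristic :=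
    Q.characteristic_of_normal (Subgroup.normal_of_isMulCommutative _)
  refine ⟨(Q : Subgroup N).map N.subtype, inferInstance, ?_⟩
  obtain ⟨k, hk⟩ := Q.2.exists_card_eq
  have hk0 : k ≠ 0 := by
    rintro rfl
    exact Q.ne_bot_of_dvd_card hpN (Subgroup.card_eq_one.mp hk)
  rw [Subgroup.card_map_of_injective N.subtype_injective, hk]
  exact hp.isPrimePow.pow hk0

theorem isPrimePow_index_of_isCoatom [Finite G] [IsSolvable G] {H : Subgroup G}
    (hH : IsCoatom H) : IsPrimePow H.index := by
  induction hcard : Nat.card G using Nat.strong_induction_on generalizing G with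
  | _ n ih =>
  have : Nontrivial G := by
    rw [← not_subsingleton_iff_nontrivial]
    intro
    exact hH.1 (Subsingleton.elim _ _)
  obtain ⟨P, hP, hPcard⟩ := exists_normal_isPrimePow_card (G := G)
  by_cases hPH : P ≤ H
  · have hker : (QuotientGroup.mk' P).ker ≤ H := (QuotientGroup.ker_mk' P).symm ▸ hPH
    rw [← Subgroup.index_map_eq H (QuotientGroup.mk'_surjective P) hker]
    refine ih _ ?_ (Subgroup.isCoatom_map_of_surjective (QuotientGroup.mk'_surjective P) hH hker)
      rfl
    rw [← hcard, Subgroup.card_eq_card_quotient_mul_card_subgroup P]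
    exact lt_mul_of_one_lt_right Nat.card_pos hPcard.one_lt
  · have hsup : H ⊔ P = ⊤ := hH.2 _ (left_lt_sup.mpr hPH)
    refine hPcard.dvd ?_ (Subgroup.index_eq_one.not.mpr hH.1)
    rw [Subgroup.index_eq_relIndex_of_sup_eq_top hsup]
    exact Subgroup.relIndex_dvd_card H P

end Group.IsSolvable

theorem IsGalois.isCoatom_fixingSubgroup {F D : Type*} [Field F] [Field D] [Algebra F D]
    [FiniteDimensional F D] [IsGalois F D] {E : IntermediateField F D} (hE : IsAtom E) :
    IsCoatom E.fixingSubgroup :=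
  isAtom_dual_iff_isCoatom.mp ((intermediateFieldEquivSubgroup.isAtom_iff E).mpr hE)

theorem stmt4_general {F D : Type*} [Field F] [Field D] [Algebra F D]
    [FiniteDimensional F D] [IsGalois F D]
    (E : IntermediateField F D) (hE : 1 < Module.finrank F E)
    (hprim : ∀ K : IntermediateField F D, K ≤ E → K = ⊥ ∨ K = E)
    (hsolv : IsSolvable (D ≃ₐ[F] D)) :
    ∃ l n : ℕ, l.Prime ∧ 0 < n ∧ Module.finrank F E = l ^ n := by
  have hatom : IsAtom E :=
    ⟨fun h => by subst h; simp at hE, fun K hK => (hprim K hK.le).resolve_right hK.ne⟩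
  have : Group.IsSolvable (D ≃ₐ[F] D) := hsolv
  have hindex := Group.IsSolvable.isPrimePow_index_of_isCoatom
    (IsGalois.isCoatom_fixingSubgroup hatom)
  rw [← IntermediateField.finrank_eq_fixingSubgroup_index] at hindex
  obtain ⟨l, n, hl, hn, h⟩ := (isPrimePow_nat_iff _).mp hindex
  exact ⟨l, n, hl, hn, h.symm⟩

theorem stmt4 {F D : Type*} [Field F] [Field D] [Algebra F D]
    [FiniteDimensional F D] [IsGalois F D]
    (E : IntermediateField F D) (hE : 1 < Module.finrank F E)
    (hclos : IntermediateField.normalClosure F E D = ⊤)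
    (hprim : ∀ K : IntermediateField F D, K ≤ E → K = ⊥ ∨ K = E)
    (hsolv : IsSolvable (D ≃ₐ[F] D)) :
    ∃ l n : ℕ, l.Prime ∧ 0 < n ∧ Module.finrank F E = l ^ n :=
  stmt4_general E hE hprim hsolv
end

section
/- Let l be a prime, G a finite solvable group, and M a finite-dimensional F_l-linear representation of G which is faithful (the homomorphism G → GL(M) is injective) and simple (M is nonzero and has no G-stable F_l-subspaces other than 0 and M). Then the group cohomology H^i(G, M) vanishes for every i > 0. -/
/-!
A nontrivial solvable group `G` has a nontrivial abelian normal subgroup `A`. For a faithful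
simple module `M`, the invariants of any nontrivial normal subgroup are a proper `G`-stable
subspace, hence zero; since an `l`-group acting on a nonzero `𝔽_l`-space has a nonzero fixed
vector, this forces the `l`-torsion of `A` to be trivial, so `|A|` is prime to `l`.
Then `e = |A|⁻¹ ∑_{a ∈ A} a` is central in `𝔽_l[G]`, acts as the identity on the trivial
module and as zero on `M`. On a projective resolution `P` of `𝔽_l` it is a chain map lifting
the identity, hence homotopic to the identity, while on `Hom(P, M)` it induces zero, so all of
`H^•(G, M)` vanishes.
-/

open CategoryTheory

namespace Representation

variable {k G V : Type*} [CommRing k] [Group G] [AddCommGroup V] [Module k V]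
  {ρ : Representation k G V}

lemma map_invariants_comp_subtype (ρ : Representation k G V) (H : Subgroup G) [H.Normal]
    (g : G) : (invariants (ρ.comp H.subtype)).map (ρ g) = invariants (ρ.comp H.subtype) := by
  refine le_antisymm (Submodule.map_le_iff_le_comap.2 (le_comap_invariants ρ H g)) fun v hv => ?_
  refine ⟨ρ g⁻¹ v, le_comap_invariants ρ H g⁻¹ hv, ?_⟩
  simp [← Module.End.mul_apply, ← map_mul]

lemma invariants_comp_subtype_eq_bot (hfaith : Function.Injective ρ)
    (hsimple : ∀ W : Submodule k V, (∀ g : G, W.map (ρ g) = W) → W = ⊥ ∨ W = ⊤)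
    {H : Subgroup G} [H.Normal] (hH : H ≠ ⊥) : invariants (ρ.comp H.subtype) = ⊥ := by
  refine (hsimple _ (map_invariants_comp_subtype ρ H)).resolve_right fun htop => hH ?_
  refine (Subgroup.eq_bot_iff_forall H).2 fun h hh => hfaith ?_
  ext v
  simpa using (htop ▸ Submodule.mem_top : v ∈ invariants (ρ.comp H.subtype)) ⟨h, hh⟩

lemma invariants_ne_bot_of_isPGroup {l : ℕ} [Fact l.Prime] {P M : Type*} [Group P]
    [AddCommGroup M] [Module (ZMod l) M] [FiniteDimensional (ZMod l) M] [Nontrivial M]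
    (σ : Representation (ZMod l) P M) (hP : IsPGroup l P) : invariants σ ≠ ⊥ := by
  let _ := MulAction.compHom M σ
  have : Finite M := Module.finite_of_finite (ZMod l)
  have hdvd : l ∣ Nat.card M := by
    rw [Module.natCard_eq_pow_finrank (K := ZMod l), Nat.card_zmod]
    exact dvd_pow_self l Module.finrank_pos.ne'
  obtain ⟨v, hv, h0v⟩ := hP.exists_fixed_point_of_prime_dvd_card_of_fixed_point M hdvd
    (a := 0) fun g => map_zero (σ g)
  intro h
  exact h0v ((Submodule.mem_bot (ZMod l)).1 (h ▸ (hv : v ∈ invariants σ))).symm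

end Representation

lemma Group.IsSolvable.exists_normal_isMulCommutative_ne_bot {G : Type*} [Group G]
    [Group.IsSolvable G] [Nontrivial G] :
    ∃ A : Subgroup G, A.Normal ∧ IsMulCommutative A ∧ A ≠ ⊥ := by
  classical
  have hex : ∃ n, derivedSeries G (n + 1) = ⊥ := by
    obtain ⟨n, hn⟩ := Group.IsSolvable.solvable (G := G)
    exact ⟨n, le_bot_iff.1 (hn ▸ derivedSeries_antitone G (Nat.le_succ n))⟩
  refine ⟨derivedSeries G (Nat.find hex), derivedSeries_normal G _, ?_, ?_⟩
  · rw [← Subgroup.commutator_self_eq_bot_iff, ← derivedSeries_succ]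
    exact Nat.find_spec hex
  · cases h : Nat.find hex with
    | zero => simp
    | succ n => exact Nat.find_min hex (h ▸ Nat.lt_succ_self n)

lemma Subgroup.exists_normal_isPGroup_ne_bot_of_dvd_card {G : Type*} [Group G] {p : ℕ}
    [Fact p.Prime] {A : Subgroup G} [Finite A] [A.Normal] [IsMulCommutative A]
    (hp : p ∣ Nat.card A) : ∃ P : Subgroup G, P.Normal ∧ IsPGroup p P ∧ P ≠ ⊥ := by
  let P : Subgroup G :=
    { carrier := {g | g ∈ A ∧ g ^ p = 1}
      one_mem' := ⟨A.one_mem, one_pow p⟩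
      mul_mem' := fun {x y} hx hy => ⟨A.mul_mem hx.1 hy.1, by
        rw [Commute.mul_pow (setLike_mul_comm hx.1 hy.1), hx.2, hy.2, one_mul]⟩
      inv_mem' := fun {x} hx => ⟨A.inv_mem hx.1, by rw [inv_pow, hx.2, inv_one]⟩ }
  have hP : P.Normal := ⟨fun g hg h => ⟨Normal.conj_mem ‹_› g hg.1 h, by
    rw [conj_pow, hg.2, mul_one, mul_inv_cancel]⟩⟩
  obtain ⟨x, hx⟩ := exists_prime_orderOf_dvd_card' p hp
  refine ⟨P, hP, fun g => ⟨1, Subtype.ext (by simpa using g.2.2)⟩, fun hbot => ?_⟩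
  have hxP : (x : G) ∈ P := ⟨x.2, by rw [← hx]; exact_mod_cast pow_orderOf_eq_one x⟩
  rw [hbot, mem_bot, OneMemClass.coe_eq_one] at hxP
  exact (Fact.out : p.Prime).one_lt.ne' (hx ▸ orderOf_eq_one_iff.2 hxP)

lemma Representation.not_dvd_card_of_isMulCommutative {l : ℕ} [Fact l.Prime] {G M : Type*}
    [Group G] [AddCommGroup M] [Module (ZMod l) M] [FiniteDimensional (ZMod l) M] [Nontrivial M]
    {ρ : Representation (ZMod l) G M} (hfaith : Function.Injective ρ)
    (hsimple : ∀ W : Submodule (ZMod l) M, (∀ g : G, W.map (ρ g) = W) → W = ⊥ ∨ W = ⊤)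
    (A : Subgroup G) [Finite A] [A.Normal] [IsMulCommutative A] : ¬ l ∣ Nat.card A := by
  intro hdvd
  obtain ⟨P, hP, hPl, hPbot⟩ := Subgroup.exists_normal_isPGroup_ne_bot_of_dvd_card hdvd
  exact invariants_ne_bot_of_isPGroup (ρ.comp P.subtype) hPl
    (invariants_comp_subtype_eq_bot hfaith hsimple hPbot)

open Representation

namespace Rep

universe u

variable {k G : Type u} [CommRing k] [Group G] (N : Subgroup G) [Fintype N]
  [Invertible (Fintype.card N : k)]

lemma averageMap_comp_subtype_apply (A : Rep.{u} k G) (v : A) :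
    averageMap (A.ρ.comp N.subtype) v = ⅟(Fintype.card N : k) • ∑ n : N, A.ρ n v := by
  simp [GroupAlgebra.average, map_sum]

lemma averageMap_comp_subtype_apply_ρ [N.Normal] (A : Rep.{u} k G) (g : G) (v : A) :
    averageMap (A.ρ.comp N.subtype) (A.ρ g v) =
      A.ρ g (averageMap (A.ρ.comp N.subtype) v) := by
  rw [averageMap_comp_subtype_apply, averageMap_comp_subtype_apply, map_smul, map_sum]
  congr 1
  refine Fintype.sum_equiv (MulAut.conjNormal g⁻¹).toEquiv _ _ fun n => ?_
  simp [← Module.End.mul_apply, ← map_mul, mul_assoc]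

variable [N.Normal]

noncomputable def averageHom (A : Rep.{u} k G) : A ⟶ A :=
  ofHom ⟨averageMap (A.ρ.comp N.subtype), fun g => LinearMap.ext fun v =>
    averageMap_comp_subtype_apply_ρ N A g v⟩

lemma averageHom_comp {A B : Rep.{u} k G} (f : A ⟶ B) :
    averageHom N A ≫ f = f ≫ averageHom N B := by
  ext v
  change f.hom (averageMap (A.ρ.comp N.subtype) v) =
    averageMap (B.ρ.comp N.subtype) (f.hom v)
  simp only [averageMap_comp_subtype_apply, map_smul, map_sum, hom_comm_apply]

lemma averageHom_trivial : averageHom N (trivial k G k) = 𝟙 _ := by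
  ext
  exact averageMap_id _ 1 fun _ => rfl

lemma averageHom_eq_zero {A : Rep.{u} k G}
    (hA : invariants (A.ρ.comp N.subtype) = ⊥) : averageHom N A = 0 := by
  ext v
  exact (Submodule.mem_bot k).1 (hA ▸ averageMap_invariant _ v)

noncomputable def averageChainMap (C : ChainComplex (Rep.{u} k G) ℕ) : C ⟶ C where
  f i := averageHom N (C.X i)
  comm' i j _ := averageHom_comp N (C.d i j)

lemma averageChainMap_comp {C D : ChainComplex (Rep.{u} k G) ℕ} (φ : C ⟶ D) :
    averageChainMap N C ≫ φ = φ ≫ averageChainMap N D := by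
  ext i : 1
  exact averageHom_comp N (φ.f i)

lemma averageChainMap_single₀_trivial :
    averageChainMap N ((ChainComplex.single₀ (Rep.{u} k G)).obj (trivial k G k)) = 𝟙 _ := by
  ext : 1
  exact averageHom_trivial N

noncomputable def averageChainMapHomotopy (P : ProjectiveResolution (trivial k G k)) :
    Homotopy (averageChainMap N P.complex) (𝟙 P.complex) :=
  P.liftHomotopy (𝟙 _) _ _
    (by rw [averageChainMap_comp, averageChainMap_single₀_trivial,
      CategoryTheory.Functor.map_id])
    (by rw [CategoryTheory.Functor.map_id, Category.id_comp, Category.comp_id])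

theorem isZero_groupCohomology_of_invariants_eq_bot (A : Rep.{u} k G)
    (hA : invariants (A.ρ.comp N.subtype) = ⊥) (n : ℕ) :
    Limits.IsZero (groupCohomology A n) := by
  let P := standardResolution k G
  let F := ((linearYoneda k (Rep.{u} k G)).obj A).rightOp
  have hF : (F.mapHomologicalComplex _).map (averageChainMap N P.complex) = 0 := by
    ext i : 1
    apply Quiver.Hom.unop_inj
    ext φ : 2
    -- `F` precomposes with the average on `P_i`, which is postcomposing with the average on `A`
    exact (averageHom_comp N (show P.complex.X i ⟶ A from φ)).trans
      (by rw [averageHom_eq_zero N hA, Limits.comp_zero]; rfl)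
  have h := (F.mapHomotopy (averageChainMapHomotopy N P)).homologyMap_eq n
  rw [hF, CategoryTheory.Functor.map_id, HomologicalComplex.homologyMap_zero,
    HomologicalComplex.homologyMap_id] at h
  exact ((Limits.IsZero.iff_id_eq_zero _).2 h.symm).unop.of_iso
    (groupCohomologyIso A n P ≪≫ HomologicalComplex.homologyUnop _ _)

end Rep

theorem stmt5 (l : ℕ) [Fact l.Prime] {G : Type} [Group G] [Finite G] [Group.IsSolvable G]
    {M : Type} [AddCommGroup M] [Module (ZMod l) M] [FiniteDimensional (ZMod l) M]
    (ρ : Representation (ZMod l) G M)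
    (hfaith : Function.Injective ρ)
    (hM : Nontrivial M)
    (hsimple : ∀ W : Submodule (ZMod l) M, (∀ g : G, W.map (ρ g) = W) → W = ⊥ ∨ W = ⊤) :
    ∀ i : ℕ, 0 < i → Subsingleton (groupCohomology (Rep.of ρ) i) := by
  intro i hi
  refine ModuleCat.subsingleton_of_isZero ?_
  rcases subsingleton_or_nontrivial G with hG | hG
  · obtain ⟨m, rfl⟩ := Nat.exists_eq_add_one_of_ne_zero hi.ne'
    exact isZero_groupCohomology_succ_of_subsingleton _ m
  obtain ⟨A, hA, hAcomm, hAbot⟩ :=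
    Group.IsSolvable.exists_normal_isMulCommutative_ne_bot (G := G)
  have : Fintype A := Fintype.ofFinite A
  have hcard : (Fintype.card A : ZMod l) ≠ 0 := by
    rw [Ne, ZMod.natCast_eq_zero_iff, ← Nat.card_eq_fintype_card]
    exact ρ.not_dvd_card_of_isMulCommutative hfaith hsimple A
  have : Invertible (Fintype.card A : ZMod l) := invertibleOfNonzero hcard
  exact Rep.isZero_groupCohomology_of_invariants_eq_bot A (Rep.of ρ)
    (invariants_comp_subtype_eq_bot hfaith hsimple hAbot) i
end

section
/- Let F be a field and D a finite Galois extension of F with solvable Galois group. Let K be an intermediate field, Galois over F, such that N = Gal(D|K) is an elementary abelian l-group (l prime) of order l^n with n > 0, and such that the conjugation action of Gal(K|F) on N (coming from the exact sequence 1 → Gal(D|K) → Gal(D|F) → Gal(K|F) → 1) makes N a faithful simple F_l[Gal(K|F)]-module. Then there exists an intermediate field F ⊆ E ⊆ D with [E:F] = l^n such that E is linearly disjoint from K over F (E ∩ K = F and E·K = D), E is a primitive extension of F, and D is the Galois closure of E over F. -/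
/-!
Through the Galois correspondence the claim becomes one about `G = Gal(D|F)` and its normal
subgroup `N = Gal(D|K)`: it suffices to find a maximal subgroup `H` of `G` complementing `N` and
containing no nontrivial normal subgroup of `G`, and to take `E = D^H`.

Since `N` is abelian and minimal normal, `H ∩ N` is normalised by `H` and by `N`, so every proper
supplement `H` of `N` is a complement; since `C_G(N) = N`, a normal subgroup meeting `N` trivially
centralises `N` and is therefore trivial, so complements are core-free. A proper supplement comes
from the Frattini argument: let `M/N` be a nontrivial normal `p`-subgroup of the solvable group
`G/N`. A normal `l`-subgroup of `G` acts on `N` with a nontrivial fixed point, hence centralises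
`N` by minimality and lies in `N`; so `p ≠ l`. For a Sylow `p`-subgroup `P` of `M` we get
`N_G(P) N = G`, and `N_G(P) ≠ G`, since a normal `p`-subgroup would centralise `N`.
-/

open Subgroup

section GroupTheory

variable {G : Type*} [Group G]

theorem Subgroup.eq_bot_of_normal_of_disjoint {N : Subgroup G} [N.Normal]
    (hcent : centralizer (N : Set G) ≤ N) {C : Subgroup G} [C.Normal] (hCN : Disjoint C N) :
    C = ⊥ :=
  hCN.eq_bot_of_le fun c hc ↦ hcent <| mem_centralizer_iff.mpr fun n hn ↦
    (commute_of_normal_of_disjoint C N ‹_› ‹_› hCN c n hc hn).symm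

theorem Subgroup.inf_eq_bot_of_sup_eq_top {N : Subgroup G} [N.Normal]
    (hcomm : N ≤ centralizer (N : Set G))
    (hmin : ∀ M : Subgroup G, M.Normal → M ≤ N → M = ⊥ ∨ M = N)
    {H : Subgroup G} (hsup : H ⊔ N = ⊤) (hH : H ≠ ⊤) : H ⊓ N = ⊥ := by
  have hHN : (H ⊓ N).Normal := by
    refine normalizer_eq_top_iff.mp (top_le_iff.mp (hsup ▸ sup_le ?_ ?_))
    · exact (le_inf le_normalizer le_normalizer_of_normal).trans inf_normalizer_le_normalizer_inf
    · exact hcomm.trans <| (centralizer_le inf_le_right).trans (centralizer_le_normalizer _)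
  refine (hmin _ hHN inf_le_right).resolve_right fun h ↦ hH ?_
  rw [← hsup, eq_comm, sup_eq_left]
  exact inf_eq_right.mp h

theorem IsPGroup.inf_centralizer_ne_bot {p : ℕ} [Fact p.Prime] {M : Subgroup G}
    (hM : IsPGroup p M) (N : Subgroup G) [N.Normal] [Finite N] (hpN : p ∣ Nat.card N) :
    N ⊓ centralizer (M : Set G) ≠ ⊥ := by
  let _ : MulAction M N := MulAction.compHom N ((MulAut.conjNormal (H := N)).comp M.subtype)
  have fixed_iff : ∀ x : N, x ∈ MulAction.fixedPoints M N ↔ (x : G) ∈ centralizer M := by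
    intro x
    simp only [MulAction.mem_fixedPoints, mem_centralizer_iff, Subtype.forall, SetLike.mem_coe]
    refine forall₂_congr fun m hm ↦ ?_
    rw [← Subtype.coe_inj]
    change m * x * m⁻¹ = x ↔ _
    rw [mul_inv_eq_iff_eq_mul, eq_comm]
  obtain ⟨x, hx, h1x⟩ := hM.exists_fixed_point_of_prime_dvd_card_of_fixed_point N hpN
    ((fixed_iff 1).mpr (one_mem _))
  rw [Ne, eq_bot_iff]
  intro h
  exact h1x (Subtype.ext (mem_bot.mp (h ⟨x.2, (fixed_iff x).mp hx⟩)).symm)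

theorem Subgroup.le_of_isPGroup_of_normal {l : ℕ} [Fact l.Prime] [Finite G]
    {N : Subgroup G} [N.Normal] (hN : IsPGroup l N) (hNbot : N ≠ ⊥)
    (hcent : centralizer (N : Set G) ≤ N)
    (hmin : ∀ M : Subgroup G, M.Normal → M ≤ N → M = ⊥ ∨ M = N)
    {M : Subgroup G} [M.Normal] (hM : IsPGroup l M) : M ≤ N := by
  have hlN : l ∣ Nat.card N := by
    have : Nontrivial N := (nontrivial_iff_ne_bot N).mpr hNbot
    obtain ⟨k, hk0, hk⟩ := hN.nontrivial_iff_card.mp this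
    exact hk ▸ dvd_pow_self l hk0.ne'
  have hNM : N ⊓ centralizer (M : Set G) = N :=
    (hmin _ inferInstance inf_le_left).resolve_left (hM.inf_centralizer_ne_bot N hlN)
  exact le_centralizer_iff.mp (inf_eq_left.mp hNM) |>.trans hcent

theorem Group.IsSolvable.exists_normal_isPGroup_ne_bot [Finite G] [Group.IsSolvable G]
    [Nontrivial G] : ∃ p, p.Prime ∧ ∃ Q : Subgroup G, Q.Normal ∧ IsPGroup p Q ∧ Q ≠ ⊥ := by
  obtain ⟨A, -, hA⟩ :=
    exists_minimal_le_of_wellFoundedLT (fun A : Subgroup G ↦ A.Normal ∧ A ≠ ⊥) ⊤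
      ⟨inferInstance, top_ne_bot⟩
  obtain ⟨hAn, hAbot⟩ := hA.prop
  have : IsMulCommutative A := by
    rw [← commutator_self_eq_bot_iff]
    by_contra hAA
    exact (Group.IsSolvable.commutator_lt_of_ne_bot hAbot).not_ge
      (hA.le_of_le ⟨inferInstance, hAA⟩ (commutator_le_self A))
  have hA1 : Nat.card A ≠ 1 := by rwa [Ne, card_eq_one]
  set p := (Nat.card A).minFac
  have : Fact p.Prime := ⟨Nat.minFac_prime hA1⟩
  obtain ⟨P⟩ : Nonempty (Sylow p A) := Sylow.nonempty
  have := Sylow.characteristic_of_normal P inferInstance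
  refine ⟨p, Fact.out, P.map A.subtype, inferInstance, P.2.map _, ?_⟩
  rw [Ne, map_eq_bot_iff_of_injective _ A.subtype_injective]
  exact P.ne_bot_of_dvd_card (Nat.minFac_dvd _)

theorem Sylow.le_ker_sup_of_isPGroup_map [Finite G] {G' : Type*} [Group G'] {p : ℕ}
    [Fact p.Prime] (f : G →* G') {M : Subgroup G} (hM : IsPGroup p (M.map f)) (P : Sylow p M) :
    M ≤ f.ker ⊔ (P : Subgroup M).map M.subtype := by
  have hsurj : Function.Surjective (f.subgroupMap M) := f.subgroupMap_surjective M
  have hP : (P : Subgroup M).map (f.subgroupMap M) = ⊤ :=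
    ((P.mapSurjective hsurj).3 (hM.to_subgroup ⊤) le_top).symm
  intro m hm
  obtain ⟨x, hxP, hfx⟩ := hP.ge (mem_top (f.subgroupMap M ⟨m, hm⟩))
  have hmx : m * (x : G)⁻¹ ∈ f.ker := by
    rw [MonoidHom.mem_ker, map_mul, map_inv, mul_inv_eq_one]
    exact congrArg Subtype.val hfx.symm
  simpa using mul_mem_sup hmx (mem_map_of_mem M.subtype hxP)

theorem Subgroup.exists_ne_top_sup_eq_top {l : ℕ} [Fact l.Prime] [Finite G]
    [Group.IsSolvable G] {N : Subgroup G} [N.Normal] (hN : IsPGroup l N) (hNbot : N ≠ ⊥)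
    (hcent : centralizer (N : Set G) ≤ N)
    (hmin : ∀ M : Subgroup G, M.Normal → M ≤ N → M = ⊥ ∨ M = N) :
    ∃ S : Subgroup G, S ≠ ⊤ ∧ S ⊔ N = ⊤ := by
  by_cases hNtop : N = ⊤
  · exact ⟨⊥, (hNtop ▸ hNbot).symm, by rw [hNtop, sup_top_eq]⟩
  have : Nontrivial (G ⧸ N) := QuotientGroup.nontrivial_iff.mpr hNtop
  obtain ⟨p, hp, Q, hQ, hQp, hQbot⟩ :=
    Group.IsSolvable.exists_normal_isPGroup_ne_bot (G := G ⧸ N)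
  have : Fact p.Prime := ⟨hp⟩
  set π := QuotientGroup.mk' N
  set M := Q.comap π
  have hMQ : M.map π = Q := map_comap_eq_self_of_surjective (QuotientGroup.mk'_surjective N) Q
  have hMN : ¬ M ≤ N := fun h ↦ hQbot <| by
    rwa [← hMQ, map_eq_bot_iff, QuotientGroup.ker_mk']
  have hpl : p ≠ l := by
    rintro rfl
    refine hMN (le_of_isPGroup_of_normal hN hNbot hcent hmin ?_)
    exact hQp.comap_of_ker_isPGroup π (by rwa [QuotientGroup.ker_mk'])
  obtain ⟨P⟩ : Nonempty (Sylow p M) := Sylow.nonempty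
  have hMP : M ≤ N ⊔ (P : Subgroup M).map M.subtype := by
    simpa [π] using P.le_ker_sup_of_isPGroup_map π (hMQ ▸ hQp)
  refine ⟨normalizer ((P : Subgroup M).map M.subtype), fun htop ↦ hMN ?_, ?_⟩
  · have : ((P : Subgroup M).map M.subtype).Normal := normalizer_eq_top_iff.mp htop
    have hPN : (P : Subgroup M).map M.subtype = ⊥ :=
      eq_bot_of_normal_of_disjoint hcent (IsPGroup.disjoint_of_ne p l hpl _ _ (P.2.map _) hN)
    simpa [hPN] using hMP
  · rw [eq_top_iff, ← Sylow.normalizer_sup_eq_top P]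
    exact sup_le le_sup_left (hMP.trans (sup_le le_sup_right (le_sup_of_le_left le_normalizer)))

theorem Subgroup.normalCore_eq_bot_of_disjoint {N : Subgroup G} [N.Normal]
    (hcent : centralizer (N : Set G) ≤ N) {H : Subgroup G} (hHN : Disjoint H N) :
    H.normalCore = ⊥ :=
  eq_bot_of_normal_of_disjoint hcent (hHN.mono_left (normalCore_le H))

theorem Subgroup.exists_isCoatom_isComplement' {l : ℕ} [Fact l.Prime] [Finite G]
    [Group.IsSolvable G] {N : Subgroup G} [N.Normal] (hN : IsPGroup l N) (hNbot : N ≠ ⊥)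
    (hcent : centralizer (N : Set G) = N)
    (hmin : ∀ M : Subgroup G, M.Normal → M ≤ N → M = ⊥ ∨ M = N) :
    ∃ H : Subgroup G, IsCoatom H ∧ IsComplement' H N := by
  obtain ⟨S, hS, hSN⟩ := exists_ne_top_sup_eq_top hN hNbot hcent.le hmin
  obtain ⟨H, hH, hSH⟩ := (eq_top_or_exists_le_coatom S).resolve_left hS
  have hHN : H ⊔ N = ⊤ := top_le_iff.mp (hSN ▸ sup_le_sup_right hSH N)
  refine ⟨H, hH, isComplement'_of_disjoint_and_mul_eq_univ ?_ ?_⟩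
  · exact disjoint_iff.mpr (inf_eq_bot_of_sup_eq_top hcent.ge hmin hHN hH.1)
  · rw [← mul_normal, hHN, coe_top]

end GroupTheory

namespace IntermediateField

variable {F D : Type*} [Field F] [Field D] [Algebra F D] [FiniteDimensional F D] [IsGalois F D]

theorem fixingSubgroup_inf (E K : IntermediateField F D) :
    (E ⊓ K).fixingSubgroup = E.fixingSubgroup ⊔ K.fixingSubgroup :=
  congrArg OrderDual.ofDual (IsGalois.intermediateFieldEquivSubgroup.map_inf E K)

theorem eq_bot_or_eq_of_le_of_isCoatom_fixingSubgroup {E : IntermediateField F D}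
    (hE : IsCoatom E.fixingSubgroup) {K : IntermediateField F D} (hKE : K ≤ E) :
    K = ⊥ ∨ K = E := by
  rw [← IsGalois.fixedField_fixingSubgroup K]
  rcases hE.le_iff.mp (fixingSubgroup_le hKE) with h | h
  · exact .inl (by rw [h, IsGalois.fixedField_top])
  · exact .inr (by rw [h, IsGalois.fixedField_fixingSubgroup])

theorem normalClosure_eq_top_of_normalCore_eq_bot {E : IntermediateField F D}
    (hE : E.fixingSubgroup.normalCore = ⊥) : normalClosure F E D = ⊤ := by
  have hle : (normalClosure F E D).fixingSubgroup ≤ E.fixingSubgroup.normalCore :=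
    Subgroup.normal_le_normalCore.mpr (fixingSubgroup_le (le_normalClosure E))
  rw [hE, le_bot_iff] at hle
  rw [← IsGalois.fixedField_fixingSubgroup (normalClosure F E D), hle, fixedField_bot]

end IntermediateField

open IntermediateField

theorem stmt9_general {F D : Type*} [Field F] [Field D] [Algebra F D]
    [FiniteDimensional F D] [IsGalois F D] (hsolv : IsSolvable (D ≃ₐ[F] D))
    (K : IntermediateField F D) [IsGalois F K]
    (l n : ℕ) (hl : l.Prime) (hn : 0 < n)
    (hcardN : Nat.card K.fixingSubgroup = l ^ n)
    (hcomm : ∀ σ ∈ K.fixingSubgroup, ∀ τ ∈ K.fixingSubgroup, σ * τ = τ * σ)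
    (hfaith : ∀ g : D ≃ₐ[F] D,
      (∀ σ ∈ K.fixingSubgroup, g * σ * g⁻¹ = σ) → g ∈ K.fixingSubgroup)
    (hsimple : ∀ N' : Subgroup (D ≃ₐ[F] D), N' ≤ K.fixingSubgroup →
      (∀ g : D ≃ₐ[F] D, ∀ σ ∈ N', g * σ * g⁻¹ ∈ N') →
      N' = ⊥ ∨ N' = K.fixingSubgroup) :
    ∃ E : IntermediateField F D, Module.finrank F E = l ^ n ∧
      E ⊓ K = ⊥ ∧ E ⊔ K = ⊤ ∧
      (∀ K' : IntermediateField F D, K' ≤ E → K' = ⊥ ∨ K' = E) ∧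
      IntermediateField.normalClosure F E D = ⊤ := by
  have : Group.IsSolvable (D ≃ₐ[F] D) := hsolv
  have : Fact l.Prime := ⟨hl⟩
  set N := K.fixingSubgroup
  have hNbot : N ≠ ⊥ :=
    (Subgroup.one_lt_card_iff_ne_bot N).mp (hcardN ▸ Nat.one_lt_pow hn.ne' hl.one_lt)
  have hcent : Subgroup.centralizer (N : Set (D ≃ₐ[F] D)) = N := by
    refine le_antisymm (fun g hg ↦ hfaith g fun σ hσ ↦ ?_) fun σ hσ ↦
      Subgroup.mem_centralizer_iff.mpr fun τ hτ ↦ hcomm τ hτ σ hσ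
    rw [mul_inv_eq_iff_eq_mul, Subgroup.mem_centralizer_iff.mp hg σ hσ]
  obtain ⟨H, hH, hHN⟩ := Subgroup.exists_isCoatom_isComplement' (IsPGroup.of_card hcardN)
    hNbot hcent fun M hM hMN ↦ hsimple M hMN fun g σ hσ ↦ hM.conj_mem σ hσ g
  have hE : (fixedField H).fixingSubgroup = H := fixingSubgroup_fixedField H
  refine ⟨fixedField H, ?_, ?_, ?_, ?_, ?_⟩
  · rw [finrank_eq_fixingSubgroup_index, hE, ← hcardN, hHN.symm.index_eq_card]
  · rw [← IsGalois.fixedField_fixingSubgroup (_ ⊓ K), fixingSubgroup_inf, hE, hHN.sup_eq_top,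
      IsGalois.fixedField_top]
  · rw [← IsGalois.fixedField_fixingSubgroup (_ ⊔ K), fixingSubgroup_sup, hE,
      disjoint_iff.mp hHN.disjoint, fixedField_bot]
  · exact fun K' ↦ eq_bot_or_eq_of_le_of_isCoatom_fixingSubgroup (by rwa [hE])
  · refine normalClosure_eq_top_of_normalCore_eq_bot ?_
    rw [hE]
    exact Subgroup.normalCore_eq_bot_of_disjoint hcent.le hHN.disjoint

theorem stmt9 {F D : Type*} [Field F] [Field D] [Algebra F D]
    [FiniteDimensional F D] [IsGalois F D] (hsolv : IsSolvable (D ≃ₐ[F] D))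
    (K : IntermediateField F D) [IsGalois F K]
    (l n : ℕ) (hl : l.Prime) (hn : 0 < n)
    (hcardN : Nat.card K.fixingSubgroup = l ^ n)
    (horder : ∀ σ ∈ K.fixingSubgroup, σ ≠ 1 → orderOf σ = l)
    (hcomm : ∀ σ ∈ K.fixingSubgroup, ∀ τ ∈ K.fixingSubgroup, σ * τ = τ * σ)
    (hfaith : ∀ g : D ≃ₐ[F] D,
      (∀ σ ∈ K.fixingSubgroup, g * σ * g⁻¹ = σ) → g ∈ K.fixingSubgroup)
    (hsimple : ∀ N' : Subgroup (D ≃ₐ[F] D), N' ≤ K.fixingSubgroup →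
      (∀ g : D ≃ₐ[F] D, ∀ σ ∈ N', g * σ * g⁻¹ ∈ N') →
      N' = ⊥ ∨ N' = K.fixingSubgroup) :
    ∃ E : IntermediateField F D, Module.finrank F E = l ^ n ∧
      E ⊓ K = ⊥ ∧ E ⊔ K = ⊤ ∧
      (∀ K' : IntermediateField F D, K' ≤ E → K' = ⊥ ∨ K' = E) ∧
      IntermediateField.normalClosure F E D = ⊤ :=
  stmt9_general hsolv K l n hl hn hcardN hcomm hfaith hsimple
end

section
/- Let F be a field and D a finite Galois extension of F with solvable Galois group. Suppose E and E' are intermediate fields of D over F, each of which is a primitive extension of F (the only intermediate fields between F and E, respectively between F and E', are the trivial ones) and each of which has D as its Galois closure over F. Then E and E' are conjugate: there exists σ ∈ Gal(D|F) with σ(E) = E'. In particular, a solvable primitive extension of F is determined up to F-isomorphism by its Galois closure over F. -/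
/-!
By the Galois correspondence, `E` and `E'` correspond to maximal subgroups `H` and `K` of the
solvable group `Gal(D/F)`, and `normalClosure F E D = ⊤` says that `H` is core-free. So it suffices
to show that two core-free maximal subgroups of a finite solvable group are conjugate.

A minimal normal subgroup `N` is elementary abelian, say of exponent `p`; it is a complement
of both `H` and `K`, and it is its own centralizer. Let `M / N` be a minimal normal subgroup of
`G / N`, of exponent `q`. If `q = p`, the `p`-group `M` centralizes a nontrivial element of `N`,
hence all of `N`, forcing `M ≤ N`. So `q ≠ p`, and `H ⊓ M`, `K ⊓ M` are Sylow `q`-subgroups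
of `M`, hence conjugate. By maximality `H` and `K` are their normalizers, hence conjugate too.
-/

open Pointwise

namespace Subgroup

variable {G : Type*} [Group G]

theorem sup_inf_assoc_of_normal {N : Subgroup G} [N.Normal] (H : Subgroup G) {L : Subgroup G}
    (hNL : N ≤ L) : (N ⊔ H) ⊓ L = N ⊔ H ⊓ L := by
  apply SetLike.coe_injective
  rw [coe_inf, normal_mul, normal_mul, mul_inf_assoc _ _ _ hNL]

theorem inf_ne_bot_of_lt {N H M : Subgroup G} [N.Normal] (hsup : N ⊔ H = ⊤) (hNM : N < M) :
    H ⊓ M ≠ ⊥ := fun h => by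
  have hM := sup_inf_assoc_of_normal H hNM.le
  rw [hsup, top_inf_eq, h, sup_bot_eq] at hM
  exact hNM.ne hM.symm

theorem le_normalizer_inf_of_normal (N : Subgroup G) [N.Normal] (H : Subgroup G) :
    H ≤ normalizer (N ⊓ H : Subgroup G) :=
  (le_inf le_normalizer_of_normal le_normalizer).trans inf_normalizer_le_normalizer_inf

theorem normalizer_conj_smul (g : G) (A : Subgroup G) :
    normalizer (MulAut.conj g • A : Subgroup G) = MulAut.conj g • normalizer (A : Set G) :=
  (map_equiv_normalizer_eq A (MulAut.conj g)).symm

theorem relIndex_eq_index_of_sup_eq_top {H M : Subgroup G} [M.Normal] [M.FiniteIndex]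
    (h : H ⊔ M = ⊤) : H.relIndex M = H.index := by
  have hM : M.relIndex H = M.index := by
    rw [← relIndex_sup_right, h, relIndex_top_right]
  have h₁ := relIndex_inf_mul_relIndex H M ⊤
  have h₂ := relIndex_inf_mul_relIndex M H ⊤
  rw [inf_top_eq, relIndex_top_right, relIndex_top_right] at h₁ h₂
  rw [hM, inf_comm, ← h₁, mul_comm] at h₂
  exact (Nat.eq_of_mul_eq_mul_right (Nat.pos_of_ne_zero FiniteIndex.index_ne_zero) h₂).symm

theorem relIndex_inf_eq_card [Finite G] {N H M : Subgroup G} [N.Normal] [M.Normal]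
    (hsup : N ⊔ H = ⊤) (hinf : N ⊓ H = ⊥) (hNM : N ≤ M) :
    (H ⊓ M).relIndex M = Nat.card N := by
  have hHM : H ⊔ M = ⊤ := top_le_iff.mp (hsup ▸ sup_comm N H ▸ sup_le_sup_left hNM H)
  rw [inf_relIndex_right, relIndex_eq_index_of_sup_eq_top hHM,
    ← relIndex_eq_index_of_sup_eq_top (sup_comm N H ▸ hsup), ← inf_relIndex_right, inf_comm,
    hinf, relIndex_bot_left]

theorem isPGroup_of_forall_pow_eq_one {p k : ℕ} {K : Subgroup G}
    (h : ∀ x ∈ K, x ^ p ^ k = 1) : IsPGroup p K :=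
  fun x => ⟨k, Subtype.ext (h x x.2)⟩

theorem inf_centralizer_ne_bot_of_isPGroup {p : ℕ} [Fact p.Prime] {N M : Subgroup G} [N.Normal]
    [Finite N] (hM : IsPGroup p M) (hN : p ∣ Nat.card N) : N ⊓ centralizer M ≠ ⊥ := by
  let _ : MulAction M N := MulAction.compHom N ((MulAut.conjNormal (H := N)).comp M.subtype)
  obtain ⟨b, hb, hb1⟩ :=
    hM.exists_fixed_point_of_prime_dvd_card_of_fixed_point N hN (a := 1)
      fun m => smul_one (MulAut.conjNormal (m : G) : MulAut N)
  refine fun h => hb1 (Subtype.ext (mem_bot.mp (h ▸ mem_inf.mpr ⟨b.2, ?_⟩))).symm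
  refine mem_centralizer_iff.mpr fun m hm => ?_
  have hconj : m * b * m⁻¹ = b := congrArg Subtype.val (hb ⟨m, hm⟩)
  calc m * b = m * b * m⁻¹ * m := (inv_mul_cancel_right _ _).symm
    _ = b * m := by rw [hconj]

theorem normal_sup_eq_top_of_isCoatom {N H : Subgroup G} [N.Normal] (hH : IsCoatom H)
    (hHc : H.normalCore = ⊥) (hN : N ≠ ⊥) : N ⊔ H = ⊤ :=
  hH.lt_iff.mp <| le_sup_right.lt_of_ne fun h =>
    hN <| le_bot_iff.mp <| hHc ▸ normal_le_normalCore.mpr (le_sup_left.trans h.ge)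

theorem eq_bot_of_le_centralizer_of_normalCore_eq_bot {N H A : Subgroup G}
    (hHc : H.normalCore = ⊥) (hsup : N ⊔ H = ⊤) (hAH : A ≤ H) (hAN : A ≤ centralizer N)
    (hHA : H ≤ normalizer (A : Set G)) : A = ⊥ := by
  have hNA : N ≤ normalizer (A : Set G) :=
    (le_centralizer_iff.mp hAN).trans (centralizer_le_normalizer _)
  have : A.Normal := normalizer_eq_top_iff.mp (top_le_iff.mp (hsup ▸ sup_le hNA hHA))
  exact le_bot_iff.mp (hHc ▸ normal_le_normalCore.mpr hAH)

theorem normalizer_eq_of_isCoatom {H A : Subgroup G} (hH : IsCoatom H) (hHc : H.normalCore = ⊥)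
    (hAH : A ≤ H) (hA : A ≠ ⊥) (hHA : H ≤ normalizer (A : Set G)) :
    normalizer (A : Set G) = H := by
  refine (hH.le_iff.mp hHA).resolve_left fun htop => hA ?_
  have : A.Normal := normalizer_eq_top_iff.mp htop
  exact le_bot_iff.mp (hHc ▸ normal_le_normalCore.mpr hAH)

theorem exists_conj_eq_of_isPGroup_of_not_dvd_relIndex [Finite G] {p : ℕ} [Fact p.Prime]
    {M P Q : Subgroup G} (hPM : P ≤ M) (hQM : Q ≤ M) (hP : IsPGroup p P) (hQ : IsPGroup p Q)
    (hPi : ¬ p ∣ P.relIndex M) (hQi : ¬ p ∣ Q.relIndex M) :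
    ∃ g : G, MulAut.conj g • P = Q := by
  obtain ⟨m, hm⟩ := MulAction.exists_smul_eq M
    ((hP.comap_subtype (K := M)).toSylow hPi) ((hQ.comap_subtype (K := M)).toSylow hQi)
  have hm' := congrArg (fun S : Sylow p M => (S : Subgroup M)) hm
  change MulAut.conj m • P.subgroupOf M = Q.subgroupOf M at hm'
  rw [conj_smul_subgroupOf hPM, subgroupOf_inj,
    inf_of_le_left (conj_smul_le_of_le hPM m), inf_of_le_left hQM] at hm'
  exact ⟨m, hm'⟩

def IsMinimalNormal (N : Subgroup G) : Prop :=
  Minimal (fun K : Subgroup G => K.Normal ∧ K ≠ ⊥) N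

theorem exists_isMinimalNormal [Finite G] [Nontrivial G] : ∃ N : Subgroup G, N.IsMinimalNormal :=
  let ⟨N, _, hN⟩ := exists_minimal_le_of_wellFoundedLT _ ⊤ ⟨inferInstance, top_ne_bot⟩
  ⟨N, hN⟩

namespace IsMinimalNormal

variable {N : Subgroup G} (hN : N.IsMinimalNormal)
include hN

theorem normal : N.Normal := hN.prop.1

theorem ne_bot : N ≠ ⊥ := hN.prop.2

theorem eq_of_le {K : Subgroup G} [K.Normal] (hK : K ≠ ⊥) (hKN : K ≤ N) : K = N :=
  le_antisymm hKN (hN.2 ⟨‹_›, hK⟩ hKN)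

theorem le_centralizer [Group.IsSolvable G] : N ≤ centralizer N := by
  have := hN.normal
  refine commutator_eq_bot_iff_le_centralizer.mp (by_contra fun h => ?_)
  exact (Group.IsSolvable.commutator_lt_of_ne_bot hN.ne_bot).ne
    (hN.eq_of_le h (commutator_le_right N N))

theorem exists_prime_pow_eq_one [Finite G] [Group.IsSolvable G] :
    ∃ p, p.Prime ∧ ∀ x ∈ N, x ^ p = 1 := by
  have hNn := hN.normal
  have : Nontrivial N := (nontrivial_iff_ne_bot N).mpr hN.ne_bot
  obtain ⟨p, hp, hpN⟩ := Nat.exists_prime_and_dvd (Finite.one_lt_card (α := N)).ne'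
  have := Fact.mk hp
  obtain ⟨y, hy⟩ := exists_prime_orderOf_dvd_card' (G := N) p hpN
  let P : Subgroup G :=
    { carrier := {x | x ∈ N ∧ x ^ p = 1}
      one_mem' := ⟨N.one_mem, one_pow p⟩
      mul_mem' := fun {a b} ⟨ha, hap⟩ ⟨hb, hbp⟩ => ⟨N.mul_mem ha hb, by
        rw [Commute.mul_pow (mem_centralizer_iff.mp (hN.le_centralizer hb) a ha), hap, hbp,
          one_mul]⟩
      inv_mem' := fun {a} ⟨ha, hap⟩ => ⟨N.inv_mem ha, by rw [inv_pow, hap, inv_one]⟩ }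
  have : P.Normal := ⟨fun a ⟨ha, hap⟩ g =>
    ⟨hNn.conj_mem a ha g, by rw [conj_pow, hap, mul_one, mul_inv_cancel]⟩⟩
  have hyP : (y : G) ∈ P := ⟨y.2, by rw [← hy, ← coe_pow, pow_orderOf_eq_one, coe_one]⟩
  have hPN : P = N := hN.eq_of_le (fun h => ?_) fun x hx => hx.1
  · exact ⟨p, hp, fun x hx => (hPN.ge hx).2⟩
  have hy1 : y = 1 := Subtype.ext (mem_bot.mp (h ▸ hyP))
  exact hp.one_lt.ne' (by rw [← hy, hy1, orderOf_one])

variable {H : Subgroup G} (hH : IsCoatom H) (hHc : H.normalCore = ⊥)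
include hH hHc

theorem normalizer_inf_eq_of_isCoatom {M : Subgroup G} [M.Normal] (hNM : N < M) :
    normalizer ((H ⊓ M : Subgroup G) : Set G) = H :=
  have := hN.normal
  normalizer_eq_of_isCoatom hH hHc inf_le_left
    (inf_ne_bot_of_lt (normal_sup_eq_top_of_isCoatom hH hHc hN.ne_bot) hNM)
    (inf_comm M H ▸ le_normalizer_inf_of_normal M H)

variable [Group.IsSolvable G]

theorem inf_eq_bot_of_isCoatom : N ⊓ H = ⊥ :=
  have := hN.normal
  eq_bot_of_le_centralizer_of_normalCore_eq_bot hHc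
    (normal_sup_eq_top_of_isCoatom hH hHc hN.ne_bot) inf_le_right
    (inf_le_left.trans hN.le_centralizer) (le_normalizer_inf_of_normal N H)

theorem centralizer_eq_of_isCoatom : centralizer N = N := by
  have := hN.normal
  have hsup := normal_sup_eq_top_of_isCoatom hH hHc hN.ne_bot
  have hCH : centralizer N ⊓ H = ⊥ := eq_bot_of_le_centralizer_of_normalCore_eq_bot hHc hsup
    inf_le_right inf_le_left (le_normalizer_inf_of_normal _ H)
  calc centralizer N = (N ⊔ H) ⊓ centralizer N := by rw [hsup, top_inf_eq]
    _ = N ⊔ H ⊓ centralizer N := sup_inf_assoc_of_normal H hN.le_centralizer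
    _ = N := by rw [inf_comm, hCH, sup_bot_eq]

theorem not_isPGroup_of_lt [Finite G] {p : ℕ} [Fact p.Prime] (hNp : IsPGroup p N)
    {M : Subgroup G} [M.Normal] (hNM : N < M) : ¬ IsPGroup p M := by
  intro hM
  have := hN.normal
  have hdvd : p ∣ Nat.card N :=
    hNp.card_eq_or_dvd.resolve_left fun h => hN.ne_bot (card_eq_one.mp h)
  have hNC : N ⊓ centralizer M = N :=
    hN.eq_of_le (inf_centralizer_ne_bot_of_isPGroup hM hdvd) inf_le_left
  have hMN : M ≤ N :=
    hN.centralizer_eq_of_isCoatom hH hHc ▸ le_centralizer_iff.mp (inf_eq_left.mp hNC)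
  exact hNM.not_ge hMN

theorem isPGroup_inf_of_pow_mem {M : Subgroup G} {q : ℕ} (hMq : ∀ x ∈ M, x ^ q ∈ N) :
    IsPGroup q ↥(H ⊓ M) :=
  isPGroup_of_forall_pow_eq_one (k := 1) fun x hx => by
    rw [pow_one]
    exact mem_bot.mp <|
      hN.inf_eq_bot_of_isCoatom hH hHc ▸ mem_inf.mpr ⟨hMq x hx.2, H.pow_mem hx.1 q⟩

theorem relIndex_inf_eq_card_of_isCoatom [Finite G] {M : Subgroup G} [M.Normal] (hNM : N ≤ M) :
    (H ⊓ M).relIndex M = Nat.card N :=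
  have := hN.normal
  relIndex_inf_eq_card (normal_sup_eq_top_of_isCoatom hH hHc hN.ne_bot)
    (hN.inf_eq_bot_of_isCoatom hH hHc) hNM

end IsMinimalNormal

theorem exists_normal_gt_pow_prime_mem [Finite G] [Group.IsSolvable G] {N : Subgroup G}
    [N.Normal] (hN : N ≠ ⊤) :
    ∃ M : Subgroup G, M.Normal ∧ N < M ∧ ∃ q, q.Prime ∧ ∀ x ∈ M, x ^ q ∈ N := by
  have : Nontrivial (G ⧸ N) := QuotientGroup.nontrivial_iff.mpr hN
  obtain ⟨L, hL⟩ := exists_isMinimalNormal (G := G ⧸ N)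
  obtain ⟨q, hq, hLq⟩ := hL.exists_prime_pow_eq_one
  have := hL.normal
  refine ⟨L.comap (QuotientGroup.mk' N), inferInstance, ?_, q, hq, fun x hx => ?_⟩
  · have hker : (⊥ : Subgroup (G ⧸ N)).comap (QuotientGroup.mk' N) = N := by
      rw [MonoidHom.comap_bot, QuotientGroup.ker_mk']
    exact hker.symm.trans_lt <| (comap_lt_comap_of_surjective (QuotientGroup.mk'_surjective N)).mpr
      (bot_lt_iff_ne_bot.mpr hL.ne_bot)
  · rw [← QuotientGroup.eq_one_iff, QuotientGroup.mk_pow]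
    exact hLq _ hx

theorem exists_conj_eq_of_isCoatom_of_normalCore_eq_bot [Finite G] [Group.IsSolvable G]
    {H K : Subgroup G} (hH : IsCoatom H) (hK : IsCoatom K) (hHc : H.normalCore = ⊥)
    (hKc : K.normalCore = ⊥) : ∃ g : G, MulAut.conj g • H = K := by
  have : Nontrivial G := by
    by_contra h
    rw [not_nontrivial_iff_subsingleton] at h
    exact hH.1 (Subsingleton.elim _ _)
  obtain ⟨N, hN⟩ := exists_isMinimalNormal (G := G)
  have := hN.normal
  obtain ⟨p, hp, hNp⟩ := hN.exists_prime_pow_eq_one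
  have := Fact.mk hp
  by_cases hNtop : N = ⊤
  · have hHbot := hN.inf_eq_bot_of_isCoatom hH hHc
    have hKbot := hN.inf_eq_bot_of_isCoatom hK hKc
    rw [hNtop, top_inf_eq] at hHbot hKbot
    exact ⟨1, by rw [hHbot, hKbot, smul_bot]⟩
  obtain ⟨M, hM, hNM, q, hq, hMq⟩ := exists_normal_gt_pow_prime_mem hNtop
  have := Fact.mk hq
  have hNp' : IsPGroup p N := isPGroup_of_forall_pow_eq_one (k := 1) (by simpa using hNp)
  have hqp : q ≠ p := by
    rintro rfl
    exact hN.not_isPGroup_of_lt hH hHc hNp' hNM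
      (isPGroup_of_forall_pow_eq_one (k := 2) fun x hx => by rw [sq, pow_mul, hNp _ (hMq x hx)])
  have hqN : ¬ q ∣ Nat.card N := by
    obtain ⟨k, hk⟩ := IsPGroup.iff_card.mp hNp'
    rw [hk]
    exact fun h => hqp ((Nat.prime_dvd_prime_iff_eq hq hp).mp (hq.dvd_of_dvd_pow h))
  obtain ⟨g, hg⟩ := exists_conj_eq_of_isPGroup_of_not_dvd_relIndex inf_le_right inf_le_right
    (hN.isPGroup_inf_of_pow_mem hH hHc hMq) (hN.isPGroup_inf_of_pow_mem hK hKc hMq)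
    (hN.relIndex_inf_eq_card_of_isCoatom hH hHc hNM.le ▸ hqN)
    (hN.relIndex_inf_eq_card_of_isCoatom hK hKc hNM.le ▸ hqN)
  refine ⟨g, ?_⟩
  rw [← hN.normalizer_inf_eq_of_isCoatom hH hHc hNM,
    ← hN.normalizer_inf_eq_of_isCoatom hK hKc hNM, ← hg, normalizer_conj_smul]

end Subgroup

namespace IntermediateField

theorem isAtom_of_one_lt_finrank {F D : Type*} [Field F] [Field D] [Algebra F D]
    {E : IntermediateField F D} (hE : 1 < Module.finrank F E)
    (hprim : ∀ K : IntermediateField F D, K ≤ E → K = ⊥ ∨ K = E) : IsAtom E :=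
  ⟨fun h => by rw [h, IntermediateField.finrank_bot] at hE; exact hE.false,
    fun K hK => (hprim K hK.le).resolve_right hK.ne⟩

variable {F D : Type*} [Field F] [Field D] [Algebra F D] [FiniteDimensional F D] [IsGalois F D]

theorem isCoatom_fixingSubgroup_iff {E : IntermediateField F D} :
    IsCoatom E.fixingSubgroup ↔ IsAtom E := by
  rw [← isAtom_dual_iff_isCoatom, ← IsGalois.intermediateFieldEquivSubgroup.isAtom_iff E]
  rfl

theorem normalCore_fixingSubgroup_eq_bot {E : IntermediateField F D}
    (h : normalClosure F E D = ⊤) : E.fixingSubgroup.normalCore = ⊥ := by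
  have hE : E ≤ fixedField E.fixingSubgroup.normalCore :=
    (le_iff_le _ _).mpr (Subgroup.normalCore_le _)
  have htop : fixedField E.fixingSubgroup.normalCore = ⊤ :=
    top_le_iff.mp (h ▸ (normalClosure_le_iff_of_normal).mpr hE)
  rw [← fixingSubgroup_fixedField E.fixingSubgroup.normalCore, htop, fixingSubgroup_top]

end IntermediateField

theorem stmt10 {F D : Type*} [Field F] [Field D] [Algebra F D]
    [FiniteDimensional F D] [IsGalois F D] (hsolv : IsSolvable (D ≃ₐ[F] D))
    (E E' : IntermediateField F D)
    (hE : 1 < Module.finrank F E) (hE' : 1 < Module.finrank F E')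
    (hprimE : ∀ K : IntermediateField F D, K ≤ E → K = ⊥ ∨ K = E)
    (hprimE' : ∀ K : IntermediateField F D, K ≤ E' → K = ⊥ ∨ K = E')
    (hclosE : IntermediateField.normalClosure F E D = ⊤) (hclosE' : IntermediateField.normalClosure F E' D = ⊤) :
    ∃ σ : D ≃ₐ[F] D, E.map σ.toAlgHom = E' := by
  have : Group.IsSolvable (D ≃ₐ[F] D) := hsolv
  obtain ⟨σ, hσ⟩ := Subgroup.exists_conj_eq_of_isCoatom_of_normalCore_eq_bot
    (IntermediateField.isCoatom_fixingSubgroup_iff.mpr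
      (IntermediateField.isAtom_of_one_lt_finrank hE hprimE))
    (IntermediateField.isCoatom_fixingSubgroup_iff.mpr
      (IntermediateField.isAtom_of_one_lt_finrank hE' hprimE'))
    (IntermediateField.normalCore_fixingSubgroup_eq_bot hclosE)
    (IntermediateField.normalCore_fixingSubgroup_eq_bot hclosE')
  refine ⟨σ, IsGalois.intermediateFieldEquivSubgroup.injective ?_⟩
  exact congrArg OrderDual.toDual ((IsGalois.map_fixingSubgroup E σ).trans hσ)
end

section
/- Let Ω be a finite set with more than one element, let V be a finite-dimensional vector space over F_l (l prime) of dimension n > 0 acting on Ω simply transitively (so Ω is a torsor under the additive group of V), and let G be a subgroup of the symmetric group on Ω containing the image of V (acting by its torsor structure) as a normal subgroup. If G is solvable and primitive as a permutation group on Ω, then the F_l[G/V]-module V, with G/V acting via conjugation of G on V, is a faithful simple module. -/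
namespace IsPrimitivePermGroup

variable {Ω : Type*} {G : Subgroup (Equiv.Perm Ω)}

theorem nonempty (hprim : IsPrimitivePermGroup G) : Nonempty Ω :=
  not_isEmpty_iff.mp fun _ => hprim.1 (Subgroup.eq_bot_of_subsingleton G)

theorem image_setoid_class_eq {r : Setoid Ω} (hr : ∀ g ∈ G, ∀ a b, r a b → r (g a) (g b))
    {g : Equiv.Perm Ω} (hg : g ∈ G) (y : Ω) : ⇑g '' {x | r x y} = {x | r x (g y)} := by
  ext x
  rw [Equiv.image_eq_preimage_symm]
  refine ⟨fun h => by simpa using hr g hg _ _ h, fun h => ?_⟩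
  simpa using hr g⁻¹ (G.inv_mem hg) _ _ h

theorem setoid_total_or_discrete [Finite Ω] (hprim : IsPrimitivePermGroup G) (r : Setoid Ω)
    (hr : ∀ g ∈ G, ∀ a b, r a b → r (g a) (g b)) :
    (∀ a b, r a b) ∨ ∀ a b, r a b → a = b := by
  by_contra! ⟨⟨a, b, hab⟩, ⟨c, d, hcd, hne⟩⟩
  refine hprim.2 ⟨r.classes, r.isPartition_classes, ?_, ?_, ?_⟩
  · refine (Set.one_lt_ncard_iff).mpr ⟨_, _, r.mem_classes a, r.mem_classes b, fun h => hab ?_⟩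
    exact (Set.ext_iff.mp h a).mp (r.refl a)
  · exact ⟨_, r.mem_classes d, (Set.one_lt_ncard_iff).mpr ⟨c, d, hcd, r.refl d, hne⟩⟩
  · rintro g hg _ ⟨y, rfl⟩
    exact ⟨g y, image_setoid_class_eq hr hg y⟩

end IsPrimitivePermGroup

section RegularAction

theorem eq_of_apply_eq {V Ω : Type*} {ι : V → Equiv.Perm Ω} (hreg : ∀ x y : Ω, ∃! v, ι v x = y)
    {x : Ω} {v w : V} (h : ι v x = ι w x) : v = w :=
  (hreg x (ι w x)).unique h rfl

variable {V Ω : Type*} [AddCommGroup V] {ι : V → Equiv.Perm Ω}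

theorem map_zero_eq_one (hι : ∀ v w, ι (v + w) = ι v * ι w) : ι 0 = 1 :=
  mul_eq_left.mp (by rw [← hι 0 0, add_zero])

theorem map_neg_eq_inv (hι : ∀ v w, ι (v + w) = ι v * ι w) (v : V) : ι (-v) = (ι v)⁻¹ :=
  eq_inv_of_mul_eq_one_left (by rw [← hι, neg_add_cancel, map_zero_eq_one hι])

theorem exists_eq_of_forall_commute [Nonempty Ω] (hι : ∀ v w, ι (v + w) = ι v * ι w)
    (hreg : ∀ x y : Ω, ∃! v, ι v x = y) {g : Equiv.Perm Ω} (hg : ∀ v, Commute g (ι v)) :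
    ∃ v, g = ι v := by
  let x₀ := Classical.arbitrary Ω
  obtain ⟨w, hw, -⟩ := hreg x₀ (g x₀)
  refine ⟨w, Equiv.ext fun y => ?_⟩
  obtain ⟨v, rfl, -⟩ := hreg x₀ y
  calc g (ι v x₀) = ι v (g x₀) := DFunLike.congr_fun (hg v).eq x₀
    _ = ι v (ι w x₀) := by rw [hw]
    _ = ι w (ι v x₀) := by rw [← Equiv.Perm.mul_apply, ← hι, add_comm, hι, Equiv.Perm.mul_apply]

def translateSetoid (hι : ∀ v w, ι (v + w) = ι v * ι w) (W : AddSubgroup V) : Setoid Ω where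
  r a b := ∃ w ∈ W, ι w a = b
  iseqv :=
    { refl := fun a => ⟨0, W.zero_mem, by rw [map_zero_eq_one hι]; rfl⟩
      symm := fun ⟨w, hw, hab⟩ =>
        ⟨-w, W.neg_mem hw, by rw [map_neg_eq_inv hι, Equiv.Perm.inv_eq_iff_eq, hab]⟩
      trans := fun ⟨w, hw, hab⟩ ⟨w', hw', hbc⟩ =>
        ⟨w' + w, W.add_mem hw' hw, by rw [hι, Equiv.Perm.mul_apply, hab, hbc]⟩ }

variable (hι : ∀ v w, ι (v + w) = ι v * ι w) {W : AddSubgroup V}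

theorem translateSetoid_apply_of_normalizes {g : Equiv.Perm Ω}
    (hg : ∀ v ∈ W, ∃ w ∈ W, g * ι v * g⁻¹ = ι w) {a b : Ω} (hab : translateSetoid hι W a b) :
    translateSetoid hι W (g a) (g b) := by
  obtain ⟨v, hv, rfl⟩ := hab
  obtain ⟨w, hw, hconj⟩ := hg v hv
  exact ⟨w, hw, by rw [← hconj]; simp⟩

variable [Nonempty Ω]

theorem eq_top_of_translateSetoid_total (hreg : ∀ x y : Ω, ∃! v, ι v x = y)
    (h : ∀ a b, translateSetoid hι W a b) : W = ⊤ := by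
  refine (AddSubgroup.eq_top_iff' W).mpr fun v => ?_
  let x₀ := Classical.arbitrary Ω
  obtain ⟨w, hw, hwv⟩ := h x₀ (ι v x₀)
  rwa [← eq_of_apply_eq hreg hwv]

theorem eq_bot_of_translateSetoid_discrete (hreg : ∀ x y : Ω, ∃! v, ι v x = y)
    (h : ∀ a b, translateSetoid hι W a b → a = b) :
    W = ⊥ := by
  refine (AddSubgroup.eq_bot_iff_forall W).mpr fun w hw => ?_
  let x₀ := Classical.arbitrary Ω
  refine eq_of_apply_eq hreg (x := x₀) ?_
  rw [map_zero_eq_one hι, ← h x₀ _ ⟨w, hw, rfl⟩]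
  rfl

end RegularAction

theorem stmt14_general (l : ℕ) {V : Type*} [AddCommGroup V] [Module (ZMod l) V]
    {Ω : Type*} [Finite Ω]
    (ι : V → Equiv.Perm Ω) (hι_hom : ∀ v w : V, ι (v + w) = ι v * ι w)
    (hsimptrans : ∀ x y : Ω, ∃! v : V, ι v x = y)
    (G : Subgroup (Equiv.Perm Ω))
    (hprim : IsPrimitivePermGroup G) :
    (∀ g ∈ G, (∀ v : V, g * ι v * g⁻¹ = ι v) → ∃ v : V, g = ι v) ∧
      ∀ W : Submodule (ZMod l) V,
        (∀ g ∈ G, ∀ v ∈ W, ∃ w ∈ W, g * ι v * g⁻¹ = ι w) → W = ⊥ ∨ W = ⊤ := by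
  have := hprim.nonempty
  refine ⟨fun g _ hg => exists_eq_of_forall_commute hι_hom hsimptrans
    fun v => mul_inv_eq_iff_eq_mul.mp (hg v), fun W hW => ?_⟩
  rcases hprim.setoid_total_or_discrete (translateSetoid hι_hom W.toAddSubgroup)
    (fun g hg _ _ => translateSetoid_apply_of_normalizes hι_hom (hW g hg)) with htotal | hdiscrete
  · exact Or.inr (Submodule.toAddSubgroup_eq_top.mp
      (eq_top_of_translateSetoid_total hι_hom hsimptrans htotal))
  · refine Or.inl (Submodule.toAddSubgroup_injective ?_)
    exact eq_bot_of_translateSetoid_discrete hι_hom hsimptrans hdiscrete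

theorem stmt14 (l : ℕ) [Fact l.Prime] {V : Type*} [AddCommGroup V] [Module (ZMod l) V]
    [FiniteDimensional (ZMod l) V] (hdim : 0 < Module.finrank (ZMod l) V)
    {Ω : Type*} [Finite Ω] (hΩ : 1 < Nat.card Ω)
    (ι : V → Equiv.Perm Ω) (hι_hom : ∀ v w : V, ι (v + w) = ι v * ι w)
    (hsimptrans : ∀ x y : Ω, ∃! v : V, ι v x = y)
    (G : Subgroup (Equiv.Perm Ω)) (himg : ∀ v : V, ι v ∈ G)
    (hnormal : ∀ g ∈ G, ∀ v : V, ∃ w : V, g * ι v * g⁻¹ = ι w)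
    (hsolv : IsSolvable G) (hprim : IsPrimitivePermGroup G) :
    (∀ g ∈ G, (∀ v : V, g * ι v * g⁻¹ = ι v) → ∃ v : V, g = ι v) ∧
      ∀ W : Submodule (ZMod l) V,
        (∀ g ∈ G, ∀ v ∈ W, ∃ w ∈ W, g * ι v * g⁻¹ = ι w) → W = ⊥ ∨ W = ⊤ :=
  stmt14_general l ι hι_hom hsimptrans G hprim
end
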